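/- arXiv:quant-ph/0502173 — 3 statements merged into one kernel-verified Lean document; each statement's English description precedes it below -/
import Mathlib

section
/- A vector x in R^k is majorized by a vector y in R^k if and only if x lies in the convex hull of the set of all vectors obtained by permuting the coordinates of y. -/
open scoped BigOperators

/-- The decreasing rearrangement of a vector in `ℝ^k`. -/
noncomputable def descSort {k : ℕ} (x : Fin k → ℝ) : Fin k → ℝ :=
  fun i => (x ∘ Tuple.sort x) i.rev

/-- Sum of the `m` largest entries of `x`, i.e. partial sum of the
decreasing rearrangement. -/
noncomputable def partSum {k : ℕ} (x : Fin k → ℝ) (m : ℕ) : ℝ :=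
  ∑ i : Fin k, if (i : ℕ) < m then descSort x i else 0

/-- `Majorized x y` means `x ≺ y`. -/
noncomputable def Majorized {k : ℕ} (x y : Fin k → ℝ) : Prop :=
  (∀ m : ℕ, m < k → partSum x m ≤ partSum y m) ∧ (∑ i, x i = ∑ i, y i)

/-!
If `x ≺ y`, then for every weight vector `t` the rearrangement inequality and Abel summation give
`⟪x, t⟫ ≤ ⟪x↓, t↓⟫ ≤ ⟪y↓, t↓⟫`: as `t↓` decreases, the second step only uses that the partial
sums of `x↓ - y↓` are nonpositive with total zero. The right-hand side is `⟪y ∘ σ, t⟫` for a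
permutation `σ`, so no linear functional separates `x` from the compact convex hull of the
permutations of `y`.

Conversely, the sum of the `m` largest entries of `x` is the largest sum of `x` over an
`m`-element set of indices. It is therefore convex and invariant under permutations, so the
vectors majorized by `y` form a convex set containing every permutation of `y`.
-/

open Finset

section

variable {k : ℕ}

noncomputable def descPerm (x : Fin k → ℝ) : Equiv.Perm (Fin k) :=
  Fin.revPerm.trans (Tuple.sort x)

theorem descSort_eq_comp_descPerm (x : Fin k → ℝ) : descSort x = x ∘ descPerm x := rfl

theorem antitone_descSort (x : Fin k → ℝ) : Antitone (descSort x) :=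
  fun _ _ hij => Tuple.monotone_sort x (Fin.rev_le_rev.2 hij)

theorem descSort_comp_perm (x : Fin k → ℝ) (σ : Equiv.Perm (Fin k)) :
    descSort (x ∘ σ) = descSort x :=
  funext fun i => congrFun (Tuple.comp_perm_comp_sort_eq_comp_sort (f := x) (σ := σ)) i.rev

theorem sum_descSort (x : Fin k → ℝ) : ∑ i, descSort x i = ∑ i, x i :=
  Equiv.sum_comp (descPerm x) x

theorem partSum_eq_sum_filter (x : Fin k → ℝ) (m : ℕ) :
    partSum x m = ∑ i ∈ {i : Fin k | (i : ℕ) < m}, descSort x i :=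
  (sum_filter _ _).symm

theorem Fin.val_le_of_strictMono {m : ℕ} {f : Fin m → Fin k} (hf : StrictMono f) (j : Fin m) :
    (j : ℕ) ≤ f j := by
  simpa using card_le_card_of_injOn f (s := Iio j) (t := Iio (f j))
    (fun i hi => by simpa using hf (by simpa using hi)) hf.injective.injOn

theorem Fin.filter_val_lt_eq_map_castLEEmb {m : ℕ} (hm : m ≤ k) :
    ({i : Fin k | (i : ℕ) < m} : Finset (Fin k)) = univ.map (Fin.castLEEmb hm) := by
  ext i
  simp only [mem_filter, mem_univ, true_and, mem_map, Fin.castLEEmb_apply]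
  exact ⟨fun h => ⟨⟨i, h⟩, rfl⟩, by rintro ⟨j, rfl⟩; exact j.isLt⟩

theorem Antitone.sum_le_sum_filter_val_lt_card {M : Type*} [AddCommMonoid M] [PartialOrder M]
    [IsOrderedAddMonoid M] {g : Fin k → M} (hg : Antitone g) (s : Finset (Fin k)) :
    ∑ i ∈ s, g i ≤ ∑ i ∈ {i : Fin k | (i : ℕ) < #s}, g i := by
  have hsk : #s ≤ k := by simpa using s.card_le_univ
  set e := s.orderEmbOfFin rfl
  calc ∑ i ∈ s, g i = ∑ j, g (e j) := by
        conv_lhs => rw [← s.map_orderEmbOfFin_univ rfl, sum_map]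
        rfl
    _ ≤ ∑ j, g (Fin.castLE hsk j) :=
        sum_le_sum fun j _ => hg (Fin.le_def.2 (Fin.val_le_of_strictMono e.strictMono j))
    _ = _ := by rw [Fin.filter_val_lt_eq_map_castLEEmb hsk, sum_map]; rfl

theorem sum_le_partSum (x : Fin k → ℝ) (s : Finset (Fin k)) : ∑ i ∈ s, x i ≤ partSum x #s := by
  rw [partSum_eq_sum_filter, ← card_map (descPerm x).symm.toEmbedding]
  calc ∑ i ∈ s, x i = ∑ i ∈ s.map (descPerm x).symm.toEmbedding, descSort x i := by
        simp [sum_map, descSort_eq_comp_descPerm]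
    _ ≤ _ := (antitone_descSort x).sum_le_sum_filter_val_lt_card _

theorem exists_sum_eq_partSum (x : Fin k → ℝ) {m : ℕ} (hm : m ≤ k) :
    ∃ s : Finset (Fin k), #s = m ∧ ∑ i ∈ s, x i = partSum x m := by
  refine ⟨(univ.map (Fin.castLEEmb hm)).map (descPerm x).toEmbedding, by simp, ?_⟩
  rw [partSum_eq_sum_filter, Fin.filter_val_lt_eq_map_castLEEmb hm, sum_map]
  rfl

theorem convexOn_partSum {m : ℕ} (hm : m ≤ k) :
    ConvexOn ℝ Set.univ fun x : Fin k → ℝ => partSum x m := by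
  refine ⟨convex_univ, fun x _ y _ a b ha hb _ => ?_⟩
  obtain ⟨s, rfl, hs⟩ := exists_sum_eq_partSum (a • x + b • y) hm
  calc partSum (a • x + b • y) #s = a * ∑ i ∈ s, x i + b * ∑ i ∈ s, y i := by
        simp [← hs, sum_add_distrib, mul_sum]
    _ ≤ a • partSum x #s + b • partSum y #s := by
        simp only [smul_eq_mul]
        gcongr <;> exact sum_le_partSum _ s

theorem majorized_comp_perm (y : Fin k → ℝ) (σ : Equiv.Perm (Fin k)) : Majorized (y ∘ σ) y :=
  ⟨fun m _ => by simp only [partSum, descSort_comp_perm, le_refl], Equiv.sum_comp σ y⟩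

theorem convex_setOf_majorized (y : Fin k → ℝ) : Convex ℝ {x | Majorized x y} := by
  intro x hx x' hx' a b ha hb hab
  refine ⟨fun m hm => ?_, ?_⟩
  · calc partSum (a • x + b • x') m ≤ a • partSum x m + b • partSum x' m :=
          (convexOn_partSum hm.le).2 trivial trivial ha hb hab
      _ ≤ a • partSum y m + b • partSum y m := by gcongr; exacts [hx.1 m hm, hx'.1 m hm]
      _ = partSum y m := by rw [← add_smul, hab, one_smul]
  · simp [sum_add_distrib, ← mul_sum, hx.2, hx'.2, ← add_mul, hab]

theorem sum_range_mul_nonpos_of_antitoneOn {R : Type*} [CommRing R] [LinearOrder R]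
    [IsStrictOrderedRing R] {a d : ℕ → R} {n : ℕ} (ha : AntitoneOn a (Set.Iio n))
    (hd : ∀ m < n, ∑ i ∈ range m, d i ≤ 0) (hn : ∑ i ∈ range n, d i = 0) :
    ∑ i ∈ range n, a i * d i ≤ 0 := by
  have := sum_range_by_parts a d n
  simp only [smul_eq_mul] at this
  rw [this, hn, mul_zero, zero_sub, neg_nonpos]
  refine sum_nonneg fun i hi => ?_
  have hi : i + 1 < n := by rw [mem_range] at hi; omega
  have hai : a (i + 1) ≤ a i := ha (Set.mem_Iio.2 (by omega)) (Set.mem_Iio.2 hi) (by omega)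
  exact mul_nonneg_of_nonpos_of_nonpos (sub_nonpos.2 hai) (hd _ hi)

theorem Fin.sum_ite_val_lt_eq_sum_range {M : Type*} [AddCommMonoid M] (u : Fin k → M) {m : ℕ}
    (hm : m ≤ k) :
    ∑ i : Fin k, (if (i : ℕ) < m then u i else 0) =
      ∑ j ∈ range m, if h : j < k then u ⟨j, h⟩ else 0 := by
  rw [sum_fin_eq_sum_range, ← sum_range_add_sum_Ico _ hm, sum_eq_zero (s := Ico m k), add_zero]
  · exact sum_congr rfl fun j hj => by rw [mem_range] at hj; split_ifs <;> simp_all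
  · exact fun j hj => by rw [mem_Ico] at hj; split_ifs <;> simp_all; omega

theorem Majorized.sum_descSort_mul_le {x y : Fin k → ℝ} (h : Majorized x y) {a : Fin k → ℝ}
    (ha : Antitone a) : ∑ i, descSort x i * a i ≤ ∑ i, descSort y i * a i := by
  set ext : (Fin k → ℝ) → ℕ → ℝ := fun f j => if h : j < k then f ⟨j, h⟩ else 0 with hext
  have hprefix (m : ℕ) (hm : m ≤ k) :
      ∑ j ∈ range m, (ext (descSort x) j - ext (descSort y) j) = partSum x m - partSum y m := by
    rw [sum_sub_distrib, partSum, partSum, Fin.sum_ite_val_lt_eq_sum_range _ hm,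
      Fin.sum_ite_val_lt_eq_sum_range _ hm]
  have key : ∑ j ∈ range k, ext a j * (ext (descSort x) j - ext (descSort y) j) ≤ 0 := by
    refine sum_range_mul_nonpos_of_antitoneOn (fun i hi j hj hij => ?_) (fun m hm => ?_) ?_
    · simp only [hext, dif_pos (show i < k from hi), dif_pos (show j < k from hj)]
      exact ha (Fin.mk_le_mk.2 hij)
    · rw [hprefix m hm.le, sub_nonpos]
      exact h.1 m hm
    · rw [hprefix k le_rfl, partSum, partSum]
      simp [sum_descSort, h.2]
  rw [← sub_nonpos, ← sum_sub_distrib, sum_fin_eq_sum_range]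
  convert key using 2 with j
  simp only [hext]
  split_ifs <;> ring

theorem sum_mul_le_sum_descSort_mul_descSort (x t : Fin k → ℝ) :
    ∑ i, x i * t i ≤ ∑ i, descSort x i * descSort t i := by
  calc ∑ i, x i * t i
      = ∑ i, descSort x i * descSort t (((descPerm x).trans (descPerm t).symm) i) := by
        rw [← Equiv.sum_comp (descPerm x)]
        simp [descSort_eq_comp_descPerm]
    _ ≤ _ := ((antitone_descSort x).monovary (antitone_descSort t)).sum_mul_comp_perm_le_sum_mul

theorem sum_descSort_mul_descSort_eq (y t : Fin k → ℝ) :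
    ∑ i, descSort y i * descSort t i =
      ∑ i, y (((descPerm t).symm.trans (descPerm y)) i) * t i := by
  conv_rhs => rw [← Equiv.sum_comp (descPerm t)]
  simp [descSort_eq_comp_descPerm]

theorem Majorized.exists_perm_sum_mul_le {x y : Fin k → ℝ} (h : Majorized x y) (t : Fin k → ℝ) :
    ∃ σ : Equiv.Perm (Fin k), ∑ i, x i * t i ≤ ∑ i, y (σ i) * t i :=
  ⟨_, (sum_mul_le_sum_descSort_mul_descSort x t).trans <|
    (h.sum_descSort_mul_le (antitone_descSort t)).trans (sum_descSort_mul_descSort_eq y t).le⟩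

theorem mem_convexHull_of_forall_exists_le {E : Type*} [AddCommGroup E] [TopologicalSpace E]
    [IsTopologicalAddGroup E] [Module ℝ E] [ContinuousSMul ℝ E] [LocallyConvexSpace ℝ E]
    [T2Space E] {S : Set E} (hS : S.Finite) {x : E}
    (h : ∀ f : StrongDual ℝ E, ∃ z ∈ S, f x ≤ f z) :
    x ∈ convexHull ℝ S := by
  by_contra hx
  obtain ⟨f, u, hfS, hfx⟩ := geometric_hahn_banach_closed_point (convex_convexHull ℝ S)
    (hS.isCompact_convexHull (𝕜 := ℝ)).isClosed hx
  obtain ⟨z, hz, hxz⟩ := h f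
  linarith [hfS z (subset_convexHull ℝ S hz)]

end

/-- A vector `x ∈ ℝ^k` is majorized by `y ∈ ℝ^k` iff `x` lies in the convex
hull of the set of all coordinate permutations of `y`. -/
theorem majorized_iff_mem_convexHull_permutations {k : ℕ} (x y : Fin k → ℝ) :
    Majorized x y ↔
      x ∈ convexHull ℝ {z : Fin k → ℝ | ∃ σ : Equiv.Perm (Fin k), z = y ∘ σ} := by
  constructor
  · intro h
    have hfin : {z : Fin k → ℝ | ∃ σ : Equiv.Perm (Fin k), z = y ∘ σ}.Finite :=
      (Set.finite_range fun σ : Equiv.Perm (Fin k) => y ∘ σ).subset fun z ⟨σ, hz⟩ => ⟨σ, hz.symm⟩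
    refine mem_convexHull_of_forall_exists_le hfin fun f => ?_
    have hf : ∀ z, f z = ∑ i, z i * f fun j => if i = j then 1 else 0 := fun z => by
      rw [← f.coe_coe, LinearMap.pi_apply_eq_sum_univ]; rfl
    obtain ⟨σ, hσ⟩ := h.exists_perm_sum_mul_le fun i => f fun j => if i = j then 1 else 0
    exact ⟨y ∘ σ, ⟨σ, rfl⟩, by rw [hf, hf]; exact hσ⟩
  · refine fun hx => convexHull_min ?_ (convex_setOf_majorized y) hx
    rintro _ ⟨σ, rfl⟩
    exact majorized_comp_perm y σ
end

section
/- The diagonal entries of any real symmetric n×n matrix A are majorized by the eigenvalues of A. -/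
open scoped BigOperators

lemma descSort_antitone {k : ℕ} (x : Fin k → ℝ) : Antitone (descSort x) := by
  intro i j hij
  exact Tuple.monotone_sort x (Fin.rev_le_rev.mpr hij)

/-- The sorting-reversing permutation. -/
noncomputable def srPerm {k : ℕ} (x : Fin k → ℝ) : Equiv.Perm (Fin k) :=
  (Fin.revPerm).trans (Tuple.sort x)

lemma descSort_eq {k : ℕ} (x : Fin k → ℝ) (i : Fin k) :
    descSort x i = x (srPerm x i) := rfl

lemma sum_ite_lt {k m : ℕ} (hm : m ≤ k) :
    ∑ j : Fin k, (if (j : ℕ) < m then (1:ℝ) else 0) = m := by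
  rw [Fin.sum_univ_eq_sum_range (fun t => if t < m then (1:ℝ) else 0) k]
  rw [← Finset.sum_subset (Finset.range_subset_range.mpr hm)
    (fun j _ hj => by simp [Nat.lt_irrefl, Finset.mem_range.not.mp hj, if_neg]
    )]
  rw [Finset.sum_ite_of_true]
  · simp
  · intro j hj; exact Finset.mem_range.mp hj

lemma key_ineq {k : ℕ} (μ : Fin k → ℝ) (hμ : Antitone μ) (c : Fin k → ℝ)
    (hc0 : ∀ j, 0 ≤ c j) (hc1 : ∀ j, c j ≤ 1) (m : ℕ) (hm : m < k)
    (hsum : ∑ j, c j = m) :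
    ∑ j, c j * μ j ≤ ∑ j : Fin k, if (j : ℕ) < m then μ j else 0 := by
  set t := μ ⟨m, hm⟩ with ht
  have h1 : ∀ j : Fin k, c j * μ j - (if (j : ℕ) < m then μ j else 0)
      ≤ (c j - if (j : ℕ) < m then 1 else 0) * t := by
    intro j
    by_cases h : (j : ℕ) < m
    · have hle : j ≤ (⟨m, hm⟩ : Fin k) := by
        simp [Fin.le_def]; omega
      have hμj : t ≤ μ j := hμ hle
      simp only [if_pos h]
      nlinarith [hc1 j, hμj]
    · have hle : (⟨m, hm⟩ : Fin k) ≤ j := by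
        simp [Fin.le_def]; omega
      have hμj : μ j ≤ t := hμ hle
      simp only [if_neg h]
      nlinarith [hc0 j, hμj]
  have h2 := Finset.sum_le_sum (fun j (_ : j ∈ Finset.univ) => h1 j)
  rw [Finset.sum_sub_distrib] at h2
  have h3 : ∑ j : Fin k, (c j - if (j : ℕ) < m then 1 else 0) * t
      = (∑ j, c j - ∑ j : Fin k, if (j : ℕ) < m then (1:ℝ) else 0) * t := by
    rw [← Finset.sum_mul, Finset.sum_sub_distrib]
  rw [h3, hsum, sum_ite_lt hm.le] at h2
  simp at h2
  linarith

theorem diagonal_majorized_eigenvalues' {n : ℕ} (A : Matrix (Fin n) (Fin n) ℝ)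
    (hA : A.IsHermitian) :
    (∀ m : ℕ, m < n → partSum (fun i => A i i) m ≤ partSum hA.eigenvalues m) ∧
      (∑ i, A i i = ∑ i, hA.eigenvalues i) := by
  set U : Matrix (Fin n) (Fin n) ℝ := (hA.eigenvectorUnitary : Matrix (Fin n) (Fin n) ℝ) with hU
  set lam : Fin n → ℝ := hA.eigenvalues with hlam
  have hdiag : ∀ i, A i i = ∑ j, lam j * U i j ^ 2 := by
    intro i
    conv_lhs => rw [hA.spectral_theorem]
    simp [Matrix.mul_apply, Matrix.diagonal_apply, Matrix.star_apply,
      RCLike.ofReal_real_eq_id, Finset.sum_ite_eq, Finset.mul_sum, ite_mul, hU]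
    congr 1; ext j; ring
  have hrow : ∀ i, ∑ j, U i j ^ 2 = 1 := by
    intro i
    have h := Matrix.mem_unitaryGroup_iff.mp hA.eigenvectorUnitary.2
    have h2 := congrArg (fun M => M i i) h
    simpa [Matrix.mul_apply, Matrix.star_apply, sq, hU] using h2
  have hcol : ∀ j, ∑ i, U i j ^ 2 = 1 := by
    intro j
    have h := Matrix.mem_unitaryGroup_iff'.mp hA.eigenvectorUnitary.2
    have h2 := congrArg (fun M => M j j) h
    simpa [Matrix.mul_apply, Matrix.star_apply, sq, mul_comm, hU] using h2
  constructor
  · intro m hm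
    set x : Fin n → ℝ := fun i => A i i with hx
    set e : Equiv.Perm (Fin n) := srPerm x with he
    set c : Fin n → ℝ := fun j => ∑ i : Fin n, if (i : ℕ) < m then U (e i) j ^ 2 else 0 with hc
    have hc0 : ∀ j, 0 ≤ c j := by
      intro j
      apply Finset.sum_nonneg
      intro i _
      split <;> positivity
    have hc1 : ∀ j, c j ≤ 1 := by
      intro j
      have : c j ≤ ∑ i : Fin n, U (e i) j ^ 2 := by
        apply Finset.sum_le_sum
        intro i _
        split
        · exact le_rfl
        · positivity
      calc c j ≤ ∑ i : Fin n, U (e i) j ^ 2 := this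
        _ = ∑ i : Fin n, U i j ^ 2 := Equiv.sum_comp e (fun i => U i j ^ 2)
        _ = 1 := hcol j
    have hcsum : ∑ j, c j = m := by
      rw [Finset.sum_comm]
      calc ∑ i : Fin n, ∑ j : Fin n, (if (i : ℕ) < m then U (e i) j ^ 2 else 0)
          = ∑ i : Fin n, (if (i : ℕ) < m then (1:ℝ) else 0) := by
            apply Finset.sum_congr rfl
            intro i _
            split
            · exact hrow (e i)
            · simp
        _ = m := sum_ite_lt hm.le
    have hps : partSum x m = ∑ j, c j * lam j := by
      unfold partSum
      have h1 : ∀ i : Fin n, (if (i : ℕ) < m then descSort x i else 0)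
          = ∑ j, (if (i : ℕ) < m then lam j * U (e i) j ^ 2 else 0) := by
        intro i
        split
        · rw [descSort_eq, hx]; exact hdiag (e i)
        · simp
      rw [Finset.sum_congr rfl (fun i _ => h1 i), Finset.sum_comm]
      apply Finset.sum_congr rfl
      intro j _
      show (∑ i : Fin n, if (i : ℕ) < m then lam j * U (e i) j ^ 2 else 0)
          = (∑ i : Fin n, if (i : ℕ) < m then U (e i) j ^ 2 else 0) * lam j
      rw [Finset.sum_mul]
      apply Finset.sum_congr rfl
      intro i _
      split <;> ring
    rw [hps]
    have he2 : ∑ j, c j * lam j = ∑ j, (c (srPerm lam j)) * descSort lam j := by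
      rw [← Equiv.sum_comp (srPerm lam) (fun j => c j * lam j)]
      rfl
    rw [he2]
    have hk := key_ineq (descSort lam) (descSort_antitone lam) (fun j => c (srPerm lam j))
      (fun j => hc0 _) (fun j => hc1 _) m hm
      (by rw [Equiv.sum_comp (srPerm lam) c]; exact hcsum)
    exact hk
  · calc ∑ i, A i i = ∑ i, ∑ j, lam j * U i j ^ 2 :=
        Finset.sum_congr rfl (fun i _ => hdiag i)
      _ = ∑ j : Fin n, lam j := by
        rw [Finset.sum_comm]
        apply Finset.sum_congr rfl
        intro j _
        rw [← Finset.mul_sum, hcol j, mul_one]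

/-- The diagonal of a real symmetric matrix is majorized by its eigenvalues. -/
theorem diagonal_majorized_eigenvalues {n : ℕ} (A : Matrix (Fin n) (Fin n) ℝ)
    (hA : A.IsHermitian) :
    Majorized (fun i => A i i) hA.eigenvalues := by
  exact diagonal_majorized_eigenvalues' A hA
end

section
/- Let α, β ∈ R^3 be s-ordered vectors (α₁ ≥ α₂ ≥ |α₃| and β₁ ≥ β₂ ≥ |β₃|). Define λ = (α₁+α₂−α₃, α₁−α₂+α₃, −α₁+α₂+α₃, −α₁−α₂−α₃) and μ analogously from β. Then λ ≺ μ (4-vector majorization) if and only if α ≺_s β. -/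
open scoped BigOperators

/-- The s-ordered version of a vector in `ℝ³`: absolute values sorted
decreasingly, with the sign of the product of the entries on the last one. -/
noncomputable def sOrder (v : Fin 3 → ℝ) : Fin 3 → ℝ :=
  ![descSort (fun i => |v i|) 0, descSort (fun i => |v i|) 1,
    Real.sign (v 0 * v 1 * v 2) * descSort (fun i => |v i|) 2]

/-- `SMajorized x y` means `x ≺ₛ y` (s-majorization on `ℝ³`). -/
noncomputable def SMajorized (x y : Fin 3 → ℝ) : Prop :=
  sOrder x 0 ≤ sOrder y 0 ∧
  sOrder x 0 + sOrder x 1 + sOrder x 2 ≤ sOrder y 0 + sOrder y 1 + sOrder y 2 ∧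
  sOrder x 0 + sOrder x 1 - sOrder x 2 ≤ sOrder y 0 + sOrder y 1 - sOrder y 2

lemma descSort_eq_of_antitone {k : ℕ} {x : Fin k → ℝ} (hx : Antitone x) :
    descSort x = x := by
  have hmono : Monotone (x ∘ ⇑(Fin.revPerm : Equiv.Perm (Fin k))) := by
    intro i j hij
    exact hx (by simpa using Fin.rev_le_rev.mpr hij)
  have h := Tuple.unique_monotone (Tuple.monotone_sort x) hmono
  funext i
  have := congrFun h i.rev
  simpa [descSort, Fin.rev_rev] using this

lemma antitone3 {x : Fin 3 → ℝ} (h01 : x 1 ≤ x 0) (h12 : x 2 ≤ x 1) :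
    Antitone x := by
  intro i j hij
  fin_cases i <;> fin_cases j <;> simp_all <;> linarith

lemma antitone4 {x : Fin 4 → ℝ} (h01 : x 1 ≤ x 0) (h12 : x 2 ≤ x 1)
    (h23 : x 3 ≤ x 2) : Antitone x := by
  intro i j hij
  fin_cases i <;> fin_cases j <;> simp_all <;> linarith

lemma sOrder_eq {a : Fin 3 → ℝ} (ha : a 1 ≤ a 0 ∧ |a 2| ≤ a 1) :
    sOrder a = a := by
  obtain ⟨h01, h2⟩ := ha
  have h2' := abs_le.mp h2
  have ha1 : 0 ≤ a 1 := (abs_nonneg _).trans h2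
  have ha0 : 0 ≤ a 0 := ha1.trans h01
  have habs : (fun i => |a i|) = ![a 0, a 1, |a 2|] := by
    funext i; fin_cases i <;> simp [abs_of_nonneg, ha0, ha1]
  have hanti : Antitone (fun i => |a i|) := by
    rw [habs]
    exact antitone3 (by simpa using h01) (by simpa using h2)
  have hds := descSort_eq_of_antitone hanti
  have hsign : Real.sign (a 0 * a 1 * a 2) * |a 2| = a 2 := by
    rcases lt_trichotomy (a 2) 0 with h | h | h
    · have h0 : 0 < a 1 := lt_of_lt_of_le (abs_pos.mpr h.ne) h2
      have h0' : 0 < a 0 := lt_of_lt_of_le h0 h01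
      rw [Real.sign_of_neg (mul_neg_of_pos_of_neg (mul_pos h0' h0) h), abs_of_neg h]; ring
    · simp [h]
    · have h0 : 0 < a 1 := h.trans_le ((le_abs_self _).trans h2)
      have h0' : 0 < a 0 := lt_of_lt_of_le h0 h01
      rw [Real.sign_of_pos (mul_pos (mul_pos h0' h0) h), abs_of_pos h]; ring
  funext i
  fin_cases i <;> simp [sOrder, hds] <;>
    simp [abs_of_nonneg, ha0, ha1, hsign]

lemma fin4_vals : ((0:Fin 4):ℕ) = 0 ∧ ((1:Fin 4):ℕ) = 1 ∧ ((2:Fin 4):ℕ) = 2 ∧ ((3:Fin 4):ℕ) = 3 := by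
  refine ⟨rfl, rfl, rfl, rfl⟩

lemma partSum4 {x : Fin 4 → ℝ} (hx : Antitone x) :
    partSum x 0 = 0 ∧ partSum x 1 = x 0 ∧ partSum x 2 = x 0 + x 1 ∧
      partSum x 3 = x 0 + x 1 + x 2 := by
  obtain ⟨e0, e1, e2, e3⟩ := fin4_vals
  simp only [partSum, descSort_eq_of_antitone hx]
  rw [Fin.sum_univ_four, Fin.sum_univ_four, Fin.sum_univ_four, Fin.sum_univ_four]
  simp [e0, e1, e2, e3]

/-- For s-ordered 3-vectors `α, β`, the associated zero-sum 4-vectors are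
majorized iff `α ≺ₛ β`. -/
theorem fourVector_majorized_iff_sMajorized
    (a b : Fin 3 → ℝ)
    (ha : a 1 ≤ a 0 ∧ |a 2| ≤ a 1) (hb : b 1 ≤ b 0 ∧ |b 2| ≤ b 1) :
    Majorized ![a 0 + a 1 - a 2, a 0 - a 1 + a 2, -a 0 + a 1 + a 2, -a 0 - a 1 - a 2]
              ![b 0 + b 1 - b 2, b 0 - b 1 + b 2, -b 0 + b 1 + b 2, -b 0 - b 1 - b 2]
      ↔ SMajorized a b := by
  obtain ⟨ha01, ha2⟩ := ha
  obtain ⟨hb01, hb2⟩ := hb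
  obtain ⟨ha2l, ha2r⟩ := abs_le.mp ha2
  obtain ⟨hb2l, hb2r⟩ := abs_le.mp hb2
  set xa : Fin 4 → ℝ := ![a 0 + a 1 - a 2, a 0 - a 1 + a 2, -a 0 + a 1 + a 2, -a 0 - a 1 - a 2] with hxa
  set xb : Fin 4 → ℝ := ![b 0 + b 1 - b 2, b 0 - b 1 + b 2, -b 0 + b 1 + b 2, -b 0 - b 1 - b 2] with hxb
  have hanta : Antitone xa := by
    apply antitone4 <;> simp [hxa] <;> linarith
  have hantb : Antitone xb := by
    apply antitone4 <;> simp [hxb] <;> linarith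
  obtain ⟨pa0, pa1, pa2, pa3⟩ := partSum4 hanta
  obtain ⟨pb0, pb1, pb2, pb3⟩ := partSum4 hantb
  have exa : xa 0 = a 0 + a 1 - a 2 ∧ xa 1 = a 0 - a 1 + a 2 ∧ xa 2 = -a 0 + a 1 + a 2 := by
    refine ⟨rfl, rfl, rfl⟩
  have exb : xb 0 = b 0 + b 1 - b 2 ∧ xb 1 = b 0 - b 1 + b 2 ∧ xb 2 = -b 0 + b 1 + b 2 := by
    refine ⟨rfl, rfl, rfl⟩
  obtain ⟨ea0, ea1, ea2⟩ := exa
  obtain ⟨eb0, eb1, eb2⟩ := exb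
  simp only [ea0, ea1, ea2] at pa1 pa2 pa3
  simp only [eb0, eb1, eb2] at pb1 pb2 pb3
  have hsum : ∑ i, xa i = ∑ i, xb i := by
    rw [Fin.sum_univ_four, Fin.sum_univ_four]
    simp [hxa, hxb]; ring
  rw [SMajorized, sOrder_eq ⟨ha01, ha2⟩, sOrder_eq ⟨hb01, hb2⟩]
  constructor
  · rintro ⟨h, -⟩
    have h1 := h 1 (by norm_num)
    have h2 := h 2 (by norm_num)
    have h3 := h 3 (by norm_num)
    rw [pa1, pb1] at h1
    rw [pa2, pb2] at h2
    rw [pa3, pb3] at h3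
    exact ⟨by linarith, by linarith, by linarith⟩
  · rintro ⟨s1, s2, s3⟩
    refine ⟨fun m hm => ?_, hsum⟩
    interval_cases m
    · rw [pa0, pb0]
    · rw [pa1, pb1]; linarith
    · rw [pa2, pb2]; linarith
    · rw [pa3, pb3]; linarith
end
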